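/- arXiv:2202.03362 — 2 statements merged into one kernel-verified Lean document; each statement's English description precedes it below -/
import Mathlib

section
/- Suppose ω_N = (α^{+,(N)}, α^{−,(N)}, γ₁^{(N)}, δ^{(N)}) ∈ Ω̂ converges to ω = (α⁺, α⁻, γ₁, δ) ∈ Ω̂ coordinate-wise (α_i^{±,(N)} → α_i^{±} for every i, γ₁^{(N)} → γ₁, δ^{(N)} → δ). Then ∑_{i=1}^∞ |α_i^{+,(N)} − α_i⁺|³ → 0 and ∑_{i=1}^∞ |α_i^{−,(N)} − α_i⁻|³ → 0 as N → ∞. -/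
open Filter Topology Finset

/-- The parameter space Ω̂ of quadruples (α⁺, α⁻, γ₁, δ). -/
structure OmegaHat where
  aP : ℕ → ℝ
  aM : ℕ → ℝ
  g1 : ℝ
  del : ℝ
  aP_nonneg : ∀ i, 0 ≤ aP i
  aM_nonneg : ∀ i, 0 ≤ aM i
  aP_antitone : Antitone aP
  aM_antitone : Antitone aM
  del_nonneg : 0 ≤ del
  summable_aP_sq : Summable fun i => aP i ^ 2
  summable_aM_sq : Summable fun i => aM i ^ 2
  sum_sq_le : (∑' i, aP i ^ 2) + (∑' i, aM i ^ 2) ≤ del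

/-- γ₂ = δ − ∑ (α_i⁺)² − ∑ (α_i⁻)². -/
noncomputable def gamma2 (ω : OmegaHat) : ℝ :=
  ω.del - (∑' i, ω.aP i ^ 2) - (∑' i, ω.aM i ^ 2)

/-- The Laguerre–Pólya function E_ω. -/
noncomputable def Eomega (ω : OmegaHat) (z : ℂ) : ℂ :=
  Complex.exp (-(ω.g1 : ℂ) * z - (gamma2 ω : ℂ) / 2 * z ^ 2) *
    (∏' i, (Complex.exp (z * (ω.aP i : ℂ)) * (1 - z * (ω.aP i : ℂ)))) *
    (∏' i, (Complex.exp (-(z * (ω.aM i : ℂ))) * (1 + z * (ω.aM i : ℂ))))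

/-!
For a non-increasing nonnegative sequence, `(i + 1) α_i² ≤ ∑ α_j² ≤ δ`. Once `δ^{(N)} ≤ δ + 1`,
both `α_i^{(N)}` and `α_i` have square at most `t_i := (δ + 1) / (i + 1)`, hence so does their
difference, and `|α_i^{(N)} - α_i|³ ≤ t_i^{3/2}`: a summable bound independent of `N`. Dominated
convergence then turns the coordinate-wise convergence into convergence of the cubic sums.
-/

lemma Antitone.sq_le_tsum_sq_div {a : ℕ → ℝ} (ha : Antitone a) (ha0 : ∀ i, 0 ≤ a i)
    (hs : Summable fun i => a i ^ 2) (i : ℕ) :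
    a i ^ 2 ≤ (∑' j, a j ^ 2) / (i + 1) := by
  rw [le_div_iff₀ (by positivity)]
  calc a i ^ 2 * (i + 1) = ∑ _j ∈ range (i + 1), a i ^ 2 := by simp [mul_comm]
    _ ≤ ∑ j ∈ range (i + 1), a j ^ 2 :=
      sum_le_sum fun j hj => pow_le_pow_left₀ (ha0 i) (ha (Nat.lt_succ_iff.mp (mem_range.mp hj))) 2
    _ ≤ ∑' j, a j ^ 2 := hs.sum_le_tsum _ fun j _ => sq_nonneg (a j)

lemma OmegaHat.aP_sq_le (ω : OmegaHat) (i : ℕ) : ω.aP i ^ 2 ≤ ω.del / (i + 1) := by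
  have hM : 0 ≤ ∑' j, ω.aM j ^ 2 := tsum_nonneg fun j => sq_nonneg (ω.aM j)
  refine (ω.aP_antitone.sq_le_tsum_sq_div ω.aP_nonneg ω.summable_aP_sq i).trans ?_
  gcongr
  linarith [ω.sum_sq_le]

lemma OmegaHat.aM_sq_le (ω : OmegaHat) (i : ℕ) : ω.aM i ^ 2 ≤ ω.del / (i + 1) := by
  have hP : 0 ≤ ∑' j, ω.aP j ^ 2 := tsum_nonneg fun j => sq_nonneg (ω.aP j)
  refine (ω.aM_antitone.sq_le_tsum_sq_div ω.aM_nonneg ω.summable_aM_sq i).trans ?_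
  gcongr
  linarith [ω.sum_sq_le]

lemma abs_sub_pow_three_le_rpow {x y t : ℝ} (hx : 0 ≤ x) (hy : 0 ≤ y) (hxt : x ^ 2 ≤ t)
    (hyt : y ^ 2 ≤ t) : |x - y| ^ 3 ≤ t ^ (3 / 2 : ℝ) := by
  have hsq : |x - y| ^ 2 ≤ t := by
    rw [sq_abs]
    rcases le_total x y with h | h <;> nlinarith
  calc |x - y| ^ 3 = (|x - y| ^ 2) ^ (3 / 2 : ℝ) := by
        rw [← Real.rpow_natCast |x - y| 2, ← Real.rpow_mul (abs_nonneg _)]; norm_num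
    _ ≤ t ^ (3 / 2 : ℝ) := Real.rpow_le_rpow (by positivity) hsq (by norm_num)

lemma summable_div_nat_succ_rpow {c p : ℝ} (hc : 0 ≤ c) (hp : 1 < p) :
    Summable fun i : ℕ => (c / (i + 1)) ^ p := by
  have h : Summable fun i : ℕ => 1 / ((i + 1 : ℕ) : ℝ) ^ p :=
    (summable_nat_add_iff 1).mpr (Real.summable_one_div_nat_rpow.mpr hp)
  refine (h.mul_left (c ^ p)).congr fun i => ?_
  push_cast
  rw [Real.div_rpow hc (by positivity), mul_one_div]

lemma summable_abs_sub_pow_three {x y : ℕ → ℝ} {c c' : ℝ} (hx0 : ∀ i, 0 ≤ x i)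
    (hy0 : ∀ i, 0 ≤ y i) (hc : 0 ≤ c) (hx : ∀ i, x i ^ 2 ≤ c / (i + 1))
    (hy : ∀ i, y i ^ 2 ≤ c' / (i + 1)) :
    Summable fun i => |x i - y i| ^ 3 :=
  (summable_div_nat_succ_rpow (hc.trans (le_max_left c c')) (by norm_num : (1 : ℝ) < 3 / 2)
    ).of_nonneg_of_le (fun _ => by positivity) fun i =>
      abs_sub_pow_three_le_rpow (hx0 i) (hy0 i) ((hx i).trans (by gcongr; exact le_max_left _ _))
        ((hy i).trans (by gcongr; exact le_max_right _ _))

lemma tendsto_tsum_abs_sub_pow_three {f : ℕ → ℕ → ℝ} {a c : ℕ → ℝ} {d : ℝ}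
    (hf0 : ∀ N i, 0 ≤ f N i) (ha0 : ∀ i, 0 ≤ a i) (hd : 0 ≤ d)
    (hf : ∀ N i, f N i ^ 2 ≤ c N / (i + 1)) (ha : ∀ i, a i ^ 2 ≤ d / (i + 1))
    (hc : Tendsto c atTop (𝓝 d)) (hfa : ∀ i, Tendsto (fun N => f N i) atTop (𝓝 (a i))) :
    Tendsto (fun N => ∑' i, |f N i - a i| ^ 3) atTop (𝓝 0) := by
  have hlim : ∀ i, Tendsto (fun N => |f N i - a i| ^ 3) atTop (𝓝 0) := fun i => by
    simpa using (((hfa i).sub_const (a i)).abs.pow 3)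
  have hdom : ∀ᶠ N in atTop, ∀ i, ‖|f N i - a i| ^ 3‖ ≤ ((d + 1) / (i + 1)) ^ (3 / 2 : ℝ) := by
    filter_upwards [hc.eventually (eventually_le_nhds (lt_add_one d))] with N hN i
    rw [Real.norm_of_nonneg (by positivity)]
    exact abs_sub_pow_three_le_rpow (hf0 N i) (ha0 i)
      ((hf N i).trans (by gcongr)) ((ha i).trans (by gcongr; linarith))
  simpa using tendsto_tsum_of_dominated_convergence
    (summable_div_nat_succ_rpow (by linarith) (by norm_num)) hlim hdom

theorem stmt13_general (ωs : ℕ → OmegaHat) (ω : OmegaHat)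
    (hP : ∀ i, Filter.Tendsto (fun N => (ωs N).aP i) Filter.atTop (nhds (ω.aP i)))
    (hM : ∀ i, Filter.Tendsto (fun N => (ωs N).aM i) Filter.atTop (nhds (ω.aM i)))
    (hd : Filter.Tendsto (fun N => (ωs N).del) Filter.atTop (nhds ω.del)) :
    (∀ N, Summable fun i => |(ωs N).aP i - ω.aP i| ^ 3) ∧
    (∀ N, Summable fun i => |(ωs N).aM i - ω.aM i| ^ 3) ∧
    Filter.Tendsto (fun N => ∑' i, |(ωs N).aP i - ω.aP i| ^ 3) Filter.atTop (nhds 0) ∧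
    Filter.Tendsto (fun N => ∑' i, |(ωs N).aM i - ω.aM i| ^ 3) Filter.atTop (nhds 0) :=
  ⟨fun N => summable_abs_sub_pow_three (ωs N).aP_nonneg ω.aP_nonneg (ωs N).del_nonneg
      (ωs N).aP_sq_le ω.aP_sq_le,
    fun N => summable_abs_sub_pow_three (ωs N).aM_nonneg ω.aM_nonneg (ωs N).del_nonneg
      (ωs N).aM_sq_le ω.aM_sq_le,
    tendsto_tsum_abs_sub_pow_three (fun N => (ωs N).aP_nonneg) ω.aP_nonneg ω.del_nonneg
      (fun N => (ωs N).aP_sq_le) ω.aP_sq_le hd hP,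
    tendsto_tsum_abs_sub_pow_three (fun N => (ωs N).aM_nonneg) ω.aM_nonneg ω.del_nonneg
      (fun N => (ωs N).aM_sq_le) ω.aM_sq_le hd hM⟩

/-- if ω_N → ω coordinate-wise in Ω̂, then
∑_i |α_i^{+,(N)} − α_i⁺|³ → 0 and ∑_i |α_i^{−,(N)} − α_i⁻|³ → 0. -/
theorem stmt13 (ωs : ℕ → OmegaHat) (ω : OmegaHat)
    (hP : ∀ i, Filter.Tendsto (fun N => (ωs N).aP i) Filter.atTop (nhds (ω.aP i)))
    (hM : ∀ i, Filter.Tendsto (fun N => (ωs N).aM i) Filter.atTop (nhds (ω.aM i)))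
    (hg : Filter.Tendsto (fun N => (ωs N).g1) Filter.atTop (nhds ω.g1))
    (hd : Filter.Tendsto (fun N => (ωs N).del) Filter.atTop (nhds ω.del)) :
    (∀ N, Summable fun i => |(ωs N).aP i - ω.aP i| ^ 3) ∧
    (∀ N, Summable fun i => |(ωs N).aM i - ω.aM i| ^ 3) ∧
    Filter.Tendsto (fun N => ∑' i, |(ωs N).aP i - ω.aP i| ^ 3) Filter.atTop (nhds 0) ∧
    Filter.Tendsto (fun N => ∑' i, |(ωs N).aM i - ω.aM i| ^ 3) Filter.atTop (nhds 0) :=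
  stmt13_general ωs ω hP hM hd
end

section
/- The map ω ↦ E_ω from Ω̂ to entire functions is injective: if ω, ω̃ ∈ Ω̂ and E_ω(z) = E_{ω̃}(z) for all z ∈ ℂ, then ω = ω̃. -/
open Filter Topology Finset

/-!
`E_ω` is `exp` of a quadratic times two genus-one canonical products, hence entire, and its
order of vanishing at `r⁻¹` (`r ≠ 0` real) counts the indices with `α_i⁺ = r` plus those with
`α_i⁻ = -r`. So `E_ω` knows how often each positive value occurs in `α⁺` and in `α⁻`, and
non-increasing null sequences are determined by these multiplicities. Once `α^±` agree, the
canonical products coincide and do not vanish near `0`, so the exponential factors agree for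
small real `z`; this pins down `γ₁` and `γ₂`, hence `δ`.
-/

open Complex

noncomputable def weierstrassFactor (w : ℂ) : ℂ := exp w * (1 - w)

lemma norm_weierstrassFactor_sub_one_le {w : ℂ} (hw : ‖w‖ ≤ 1) :
    ‖weierstrassFactor w - 1‖ ≤ 3 * ‖w‖ ^ 2 := calc
  ‖weierstrassFactor w - 1‖ = ‖(exp w - 1 - w) - w * (exp w - 1)‖ := by
    rw [weierstrassFactor]; ring_nf
  _ ≤ ‖w‖ ^ 2 + ‖w‖ * (2 * ‖w‖) := by
    grw [norm_sub_le, norm_mul, norm_exp_sub_one_sub_id_le hw, norm_exp_sub_one_le hw]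
  _ = 3 * ‖w‖ ^ 2 := by ring

lemma differentiable_weierstrassFactor : Differentiable ℂ weierstrassFactor := by
  unfold weierstrassFactor; fun_prop

noncomputable def canonicalProduct {ι : Type*} (a : ι → ℂ) (z : ℂ) : ℂ :=
  ∏' i, weierstrassFactor (z * a i)

section CanonicalProduct

variable {ι : Type*} {a : ι → ℂ}

lemma eventually_norm_weierstrassFactor_sub_one_le (ha : Summable fun i ↦ ‖a i‖ ^ 2) (R : ℝ) :
    ∀ᶠ i in cofinite, ∀ z : ℂ, ‖z‖ ≤ R →
      ‖weierstrassFactor (z * a i) - 1‖ ≤ 3 * R ^ 2 * ‖a i‖ ^ 2 := by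
  filter_upwards [(ha.mul_left (R ^ 2)).tendsto_cofinite_zero.eventually_le_const one_pos]
    with i hi z hz
  have hza : ‖z * a i‖ ^ 2 ≤ R ^ 2 * ‖a i‖ ^ 2 := by
    rw [norm_mul, mul_pow]; gcongr
  calc ‖weierstrassFactor (z * a i) - 1‖ ≤ 3 * ‖z * a i‖ ^ 2 :=
        norm_weierstrassFactor_sub_one_le ((sq_le_one_iff₀ (norm_nonneg _)).mp (hza.trans hi))
    _ ≤ 3 * R ^ 2 * ‖a i‖ ^ 2 := by linarith

lemma summable_norm_weierstrassFactor_sub_one (ha : Summable fun i ↦ ‖a i‖ ^ 2) (z : ℂ) :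
    Summable fun i ↦ ‖weierstrassFactor (z * a i) - 1‖ :=
  Summable.of_norm_bounded_eventually (ha.mul_left (3 * ‖z‖ ^ 2)) <| by
    filter_upwards [eventually_norm_weierstrassFactor_sub_one_le ha ‖z‖] with i hi
    simpa [mul_assoc] using hi z le_rfl

lemma multipliable_weierstrassFactor (ha : Summable fun i ↦ ‖a i‖ ^ 2) (z : ℂ) :
    Multipliable fun i ↦ weierstrassFactor (z * a i) := by
  simpa using multipliable_one_add_of_summable (summable_norm_weierstrassFactor_sub_one ha z)

lemma canonicalProduct_ne_zero (ha : Summable fun i ↦ ‖a i‖ ^ 2) {z : ℂ}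
    (hz : ∀ i, z * a i ≠ 1) : canonicalProduct a z ≠ 0 := by
  have hfactor : ∀ i, 1 + (weierstrassFactor (z * a i) - 1) ≠ 0 := fun i ↦ by
    simpa [weierstrassFactor, sub_eq_zero, eq_comm (a := (1 : ℂ))] using hz i
  simpa [canonicalProduct] using
    tprod_one_add_ne_zero_of_summable hfactor (summable_norm_weierstrassFactor_sub_one ha z)

lemma differentiableOn_canonicalProduct_ball (ha : Summable fun i ↦ ‖a i‖ ^ 2) (R : ℝ) :
    DifferentiableOn ℂ (canonicalProduct a) (Metric.ball 0 R) := by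
  have hprod := Summable.hasProdLocallyUniformlyOn_one_add (K := Metric.ball (0 : ℂ) R)
    (f := fun i w ↦ weierstrassFactor (w * a i) - 1) Metric.isOpen_ball
    (ha.mul_left (3 * R ^ 2)) ?_ ?_
  · simp only [add_sub_cancel] at hprod
    refine hprod.differentiableOn (.of_forall fun s ↦ ?_) Metric.isOpen_ball
    exact DifferentiableOn.fun_finsetProd fun i _ ↦
      (differentiable_weierstrassFactor.comp (differentiable_id.mul_const (a i))).differentiableOn
  · filter_upwards [eventually_norm_weierstrassFactor_sub_one_le ha R] with i hi w hw
    exact hi w (by simpa using (Metric.mem_ball.mp hw).le)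
  · exact fun i ↦ ((differentiable_weierstrassFactor.continuous.comp (continuous_mul_const _)).sub
      continuous_const).continuousOn

lemma differentiable_canonicalProduct (ha : Summable fun i ↦ ‖a i‖ ^ 2) :
    Differentiable ℂ (canonicalProduct a) := fun z ↦
  (differentiableOn_canonicalProduct_ball ha (‖z‖ + 1)).differentiableAt
    (Metric.isOpen_ball.mem_nhds (by simp))

lemma finite_setOf_mul_eq_one (ha : Summable fun i ↦ ‖a i‖ ^ 2) (z₀ : ℂ) :
    {i | z₀ * a i = 1}.Finite := by
  have hlt : ∀ᶠ i in cofinite, ‖z₀‖ ^ 2 * ‖a i‖ ^ 2 < 1 :=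
    (ha.mul_left _).tendsto_cofinite_zero.eventually (gt_mem_nhds one_pos)
  refine hlt.subset fun i (hi : z₀ * a i = 1) ↦ ?_
  rw [Set.mem_compl_iff, Set.mem_ofPred_eq, not_lt, ← mul_pow, ← norm_mul, hi, norm_one, one_pow]

/- The factors with `z₀ * a i = 1` all equal `(z - z₀) * (-a i * exp (z * a i))`; the others form
a canonical product that does not vanish at `z₀`. -/
lemma analyticOrderAt_canonicalProduct (ha : Summable fun i ↦ ‖a i‖ ^ 2) (z₀ : ℂ) :
    analyticOrderAt (canonicalProduct a) z₀ = {i | z₀ * a i = 1}.ncard := by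
  have hfin := finite_setOf_mul_eq_one ha z₀
  set s := hfin.toFinset
  have hs : ∀ i, i ∈ s ↔ z₀ * a i = 1 := fun i ↦ hfin.mem_toFinset
  have hfactor : ∀ i ∈ s, ∀ z,
      weierstrassFactor (z * a i) = (z - z₀) * (-a i * exp (z * a i)) := fun i hi z ↦ by
    rw [weierstrassFactor, ← (hs i).mp hi]; ring
  set tail := canonicalProduct fun i : ↥(↑s : Set ι)ᶜ ↦ a i
  have htail : Summable fun i : ↥(↑s : Set ι)ᶜ ↦ ‖a i‖ ^ 2 := ha.subtype _
  rw [(differentiable_canonicalProduct ha).analyticAt z₀ |>.analyticOrderAt_eq_natCast,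
    Set.ncard_eq_toFinset_card _ hfin]
  refine ⟨fun z ↦ (∏ i ∈ s, -a i * exp (z * a i)) * tail z, ?_, ?_, .of_forall fun z ↦ ?_⟩
  · refine Differentiable.analyticAt (.mul ?_ (differentiable_canonicalProduct htail)) z₀
    exact Differentiable.fun_finsetProd fun i _ ↦
      (differentiable_exp.comp (differentiable_id.mul_const _)).const_mul _
  · refine mul_ne_zero (prod_ne_zero_iff.mpr fun i hi ↦ mul_ne_zero ?_ (exp_ne_zero _))
      (canonicalProduct_ne_zero htail fun i ↦ (hs i).not.mp i.2)
    exact neg_ne_zero.mpr (right_ne_zero_of_mul_eq_one ((hs i).mp hi))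
  · have hsplit := Multipliable.tprod_mul_tprod_compl (s := ↑s)
      (f := fun i ↦ weierstrassFactor (z * a i)) .of_finite (multipliable_weierstrassFactor htail z)
    rw [Finset.tprod_subtype' s fun i ↦ weierstrassFactor (z * a i),
      prod_congr rfl fun i hi ↦ hfactor i hi z, prod_mul_distrib, prod_const] at hsplit
    rw [canonicalProduct, ← hsplit, smul_eq_mul, mul_assoc]
    rfl

end CanonicalProduct

lemma Antitone.le_apply_of_ncard_fiber_le {a b : ℕ → ℝ} (ha : Antitone a)
    (ha₀ : Tendsto a atTop (𝓝 0)) (hb₀ : Tendsto b atTop (𝓝 0)) {n : ℕ}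
    (heq : ∀ j < n, b j = a j)
    (hfiber : ∀ r > 0, {i | b i = r}.ncard ≤ {i | a i = r}.ncard) :
    b n ≤ a n := by
  by_contra! hlt
  have hpos : 0 < b n := (ha.le_of_tendsto ha₀ n).trans_lt hlt
  have hfin : {i | b i = b n}.Finite := by
    have hev : ∀ᶠ i in cofinite, b i < b n := by
      rw [Nat.cofinite_eq_atTop]; exact hb₀.eventually (gt_mem_nhds hpos)
    exact hev.subset fun i (hi : b i = b n) ↦ by simp [hi]
  have hssubset : {i | a i = b n} ⊂ {i | b i = b n} := by
    refine Set.ssubset_iff_of_subset (fun i (hi : a i = b n) ↦ ?_) |>.mpr ⟨n, rfl, hlt.ne⟩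
    have hin : i < n := by
      by_contra! hni
      exact (ha hni).not_gt (hi ▸ hlt)
    exact (heq i hin).trans hi
  exact (Set.ncard_lt_ncard hssubset hfin).not_ge (hfiber _ hpos)

theorem Antitone.eq_of_ncard_fiber_eq {a b : ℕ → ℝ} (ha : Antitone a) (hb : Antitone b)
    (ha₀ : Tendsto a atTop (𝓝 0)) (hb₀ : Tendsto b atTop (𝓝 0))
    (hfiber : ∀ r > 0, {i | a i = r}.ncard = {i | b i = r}.ncard) : a = b := by
  funext n
  induction n using Nat.strong_induction_on with
  | _ n ih =>
    exact le_antisymm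
      (hb.le_apply_of_ncard_fiber_le hb₀ ha₀ ih fun r hr ↦ (hfiber r hr).le)
      (ha.le_apply_of_ncard_fiber_le ha₀ hb₀ (fun j hj ↦ (ih j hj).symm)
        fun r hr ↦ (hfiber r hr).ge)

lemma eq_and_eq_of_eventually_mul_add_mul_sq_eq {b c b' c' : ℝ}
    (h : ∀ᶠ t in 𝓝 (0 : ℝ), b * t + c * t ^ 2 = b' * t + c' * t ^ 2) : b = b' ∧ c = c' := by
  obtain ⟨ε, hε, hball⟩ := Metric.eventually_nhds_iff.mp h
  have hpos := hball (y := ε / 2) (by simp [abs_of_pos hε]; linarith)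
  have hneg := hball (y := -(ε / 2)) (by simp [abs_of_pos hε]; linarith)
  have hc : (c - c') * (ε / 2) ^ 2 = 0 := by linear_combination (hpos + hneg) / 2
  have hb : (b - b') * (ε / 2) = 0 := by linear_combination (hpos - hneg) / 2
  constructor
  · simpa [sub_eq_zero, hε.ne'] using hb
  · simpa [sub_eq_zero, hε.ne'] using hc

namespace OmegaHat

lemma ext {ω ω' : OmegaHat} (hP : ω.aP = ω'.aP) (hM : ω.aM = ω'.aM) (hg : ω.g1 = ω'.g1)
    (hd : ω.del = ω'.del) : ω = ω' := by
  cases ω; cases ω'; simp_all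

lemma tendsto_aP (ω : OmegaHat) : Tendsto ω.aP atTop (𝓝 0) := by
  simpa [Real.sqrt_sq (ω.aP_nonneg _)] using ω.summable_aP_sq.tendsto_atTop_zero.sqrt

lemma tendsto_aM (ω : OmegaHat) : Tendsto ω.aM atTop (𝓝 0) := by
  simpa [Real.sqrt_sq (ω.aM_nonneg _)] using ω.summable_aM_sq.tendsto_atTop_zero.sqrt

lemma summable_norm_aP_sq (ω : OmegaHat) : Summable fun i ↦ ‖(ω.aP i : ℂ)‖ ^ 2 := by
  simpa using ω.summable_aP_sq

lemma summable_norm_neg_aM_sq (ω : OmegaHat) : Summable fun i ↦ ‖-(ω.aM i : ℂ)‖ ^ 2 := by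
  simpa using ω.summable_aM_sq

end OmegaHat

lemma Eomega_eq_exp_mul_canonicalProduct (ω : OmegaHat) : Eomega ω =
    (fun z ↦ exp (-(ω.g1 : ℂ) * z - (gamma2 ω : ℂ) / 2 * z ^ 2)) *
      (canonicalProduct (fun i ↦ (ω.aP i : ℂ)) * canonicalProduct (fun i ↦ -(ω.aM i : ℂ))) := by
  funext z
  simp [Eomega, canonicalProduct, weierstrassFactor, mul_assoc, sub_eq_add_neg]

lemma analyticOrderAt_Eomega_ofReal_inv (ω : OmegaHat) {r : ℝ} (hr : r ≠ 0) :
    analyticOrderAt (Eomega ω) (r : ℂ)⁻¹ =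
      ({i | ω.aP i = r}.ncard + {i | ω.aM i = -r}.ncard : ℕ) := by
  have hexp : AnalyticAt ℂ (fun z ↦ exp (-(ω.g1 : ℂ) * z - (gamma2 ω : ℂ) / 2 * z ^ 2))
      (r : ℂ)⁻¹ := by fun_prop
  have hP := differentiable_canonicalProduct ω.summable_norm_aP_sq
  have hM := differentiable_canonicalProduct ω.summable_norm_neg_aM_sq
  have hr' : (r : ℂ) ≠ 0 := by exact_mod_cast hr
  rw [Eomega_eq_exp_mul_canonicalProduct, analyticOrderAt_mul hexp ((hP.mul hM).analyticAt _),
    hexp.analyticOrderAt_eq_zero.mpr (exp_ne_zero _), zero_add,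
    analyticOrderAt_mul (hP.analyticAt _) (hM.analyticAt _),
    analyticOrderAt_canonicalProduct ω.summable_norm_aP_sq,
    analyticOrderAt_canonicalProduct ω.summable_norm_neg_aM_sq]
  simp only [inv_mul_eq_one₀ hr', eq_comm (a := (r : ℂ)), neg_eq_iff_eq_neg]
  norm_cast

namespace OmegaHat

variable {ω ω' : OmegaHat}

lemma setOf_aP_eq_neg (ω : OmegaHat) {r : ℝ} (hr : 0 < r) : {i | ω.aP i = -r} = ∅ :=
  Set.eq_empty_of_forall_notMem fun i (hi : ω.aP i = -r) ↦ by linarith [ω.aP_nonneg i]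

lemma setOf_aM_eq_neg (ω : OmegaHat) {r : ℝ} (hr : 0 < r) : {i | ω.aM i = -r} = ∅ :=
  Set.eq_empty_of_forall_notMem fun i (hi : ω.aM i = -r) ↦ by linarith [ω.aM_nonneg i]

lemma ncard_fibers_eq_of_Eomega_eq (h : Eomega ω = Eomega ω') {r : ℝ} (hr : r ≠ 0) :
    {i | ω.aP i = r}.ncard + {i | ω.aM i = -r}.ncard =
      {i | ω'.aP i = r}.ncard + {i | ω'.aM i = -r}.ncard := by
  have horder := analyticOrderAt_Eomega_ofReal_inv ω hr
  rw [h, analyticOrderAt_Eomega_ofReal_inv ω' hr] at horder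
  exact_mod_cast horder.symm

lemma aP_eq_of_Eomega_eq (h : Eomega ω = Eomega ω') : ω.aP = ω'.aP :=
  Antitone.eq_of_ncard_fiber_eq ω.aP_antitone ω'.aP_antitone ω.tendsto_aP ω'.tendsto_aP
    fun r hr ↦ by
      simpa [setOf_aM_eq_neg _ hr] using ncard_fibers_eq_of_Eomega_eq h hr.ne'

lemma aM_eq_of_Eomega_eq (h : Eomega ω = Eomega ω') : ω.aM = ω'.aM :=
  Antitone.eq_of_ncard_fiber_eq ω.aM_antitone ω'.aM_antitone ω.tendsto_aM ω'.tendsto_aM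
    fun r hr ↦ by
      simpa [setOf_aP_eq_neg _ hr] using ncard_fibers_eq_of_Eomega_eq h (neg_ne_zero.mpr hr.ne')

lemma g1_eq_and_gamma2_eq_of_Eomega_eq (h : Eomega ω = Eomega ω') (hP : ω.aP = ω'.aP)
    (hM : ω.aM = ω'.aM) : ω.g1 = ω'.g1 ∧ gamma2 ω = gamma2 ω' := by
  set Q := canonicalProduct (fun i ↦ (ω.aP i : ℂ)) * canonicalProduct (fun i ↦ -(ω.aM i : ℂ))
  have hQ : Continuous Q := ((differentiable_canonicalProduct ω.summable_norm_aP_sq).mul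
    (differentiable_canonicalProduct ω.summable_norm_neg_aM_sq)).continuous
  have hQ₀ : Q 0 ≠ 0 := mul_ne_zero
    (canonicalProduct_ne_zero ω.summable_norm_aP_sq (by simp))
    (canonicalProduct_ne_zero ω.summable_norm_neg_aM_sq (by simp))
  have hQ_ne : ∀ᶠ t : ℝ in 𝓝 0, Q t ≠ 0 :=
    (hQ.comp continuous_ofReal).continuousAt.eventually_ne (by simpa using hQ₀)
  have hexponent : ∀ᶠ t : ℝ in 𝓝 0, -ω.g1 * t + -(gamma2 ω / 2) * t ^ 2 =
      -ω'.g1 * t + -(gamma2 ω' / 2) * t ^ 2 := by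
    filter_upwards [hQ_ne] with t ht
    have heq := congrFun h t
    rw [Eomega_eq_exp_mul_canonicalProduct, Eomega_eq_exp_mul_canonicalProduct, ← hP, ← hM,
      Pi.mul_apply, Pi.mul_apply] at heq
    apply Real.exp_injective
    apply ofReal_injective
    push_cast
    convert mul_right_cancel₀ ht heq using 2 <;> ring
  obtain ⟨hg1, hg2⟩ := eq_and_eq_of_eventually_mul_add_mul_sq_eq hexponent
  exact ⟨neg_injective hg1, by linarith⟩

end OmegaHat

/-- the map ω ↦ E_ω is injective on Ω̂. -/
theorem stmt15 (ω ω' : OmegaHat) (h : ∀ z : ℂ, Eomega ω z = Eomega ω' z) :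
    ω = ω' := by
  have hE : Eomega ω = Eomega ω' := funext h
  have hP := OmegaHat.aP_eq_of_Eomega_eq hE
  have hM := OmegaHat.aM_eq_of_Eomega_eq hE
  obtain ⟨hg1, hg2⟩ := OmegaHat.g1_eq_and_gamma2_eq_of_Eomega_eq hE hP hM
  refine OmegaHat.ext hP hM hg1 ?_
  simp only [gamma2, hP, hM] at hg2
  linarith
end
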